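/- arXiv:1311.4698 — 5 statements merged into one kernel-verified Lean document; each statement's English description precedes it below -/
import Mathlib

section
/- The supremum over [0,1]^d of the absolute difference between the empirical copula function C̃_n and the grid-based empirical copula C_n is at most d/n. That is, sup_{u ∈ [0,1]^d} |C̃_n(u) - C_n(u)| ≤ d/n, where C̃_n(u) = (1/n)∑_{k=1}^n 1{U^1_k ≤ F_n^{1-}(u^1), ..., U^d_k ≤ F_n^{d-}(u^d)} and C_n(u) = (1/n)∑_{i=1}^n 1{F_n^1(U^1_i) ≤ u^1, ..., F_n^d(U^d_i) ≤ u^d}. -/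
open Finset

/-- sup over `[0,1]^d` of `|C̃_n(u) - C_n(u)|` is at most `d/n`. -/
theorem empirical_copula_grid_diff_le
    (d n : ℕ) (hn : 0 < n) (U : Fin d → Fin n → ℝ)
    (hU01 : ∀ j i, U j i ∈ Set.Icc (0:ℝ) 1)
    (hdist : ∀ j, Function.Injective (U j))
    (Fn : Fin d → ℝ → ℝ)
    (hFn : ∀ j u, Fn j u = ((univ.filter (fun i => U j i ≤ u)).card : ℝ) / n)
    (FnInv : Fin d → ℝ → ℝ)
    (hFnInv : ∀ j u, FnInv j u = sInf {x : ℝ | u ≤ Fn j x})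
    (Ctil Cn : (Fin d → ℝ) → ℝ)
    (hCtil : ∀ u, Ctil u =
      ((univ.filter (fun k => ∀ j, U j k ≤ FnInv j (u j))).card : ℝ) / n)
    (hCn : ∀ u, Cn u =
      ((univ.filter (fun i => ∀ j, Fn j (U j i) ≤ u j)).card : ℝ) / n) :
    ∀ u : Fin d → ℝ, (∀ j, u j ∈ Set.Icc (0:ℝ) 1) →
      |Ctil u - Cn u| ≤ (d : ℝ) / n := by
  intro u hu
  have hn' : (0:ℝ) < n := by exact_mod_cast hn
  have hFnnn : ∀ j x, 0 ≤ Fn j x := by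
    intro j x; rw [hFn]; positivity
  have hFnstep : ∀ j (k : Fin n) x, x < U j k → Fn j x < Fn j (U j k) := by
    intro j k x hx
    rw [hFn, hFn]
    have hss : univ.filter (fun i => U j i ≤ x) ⊂ univ.filter (fun i => U j i ≤ U j k) := by
      refine (Finset.ssubset_iff_of_subset ?_).mpr ?_
      · intro i hi
        simp only [Finset.mem_filter] at hi ⊢
        exact ⟨hi.1, hi.2.trans hx.le⟩
      exact ⟨k, by simp, by simp [not_le.mpr hx]⟩
    have hc := Finset.card_lt_card hss
    have : ((univ.filter (fun i => U j i ≤ x)).card : ℝ)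
        < ((univ.filter (fun i => U j i ≤ U j k)).card : ℝ) := by exact_mod_cast hc
    exact div_lt_div_of_pos_right this hn'
  have hFn1 : ∀ j, u j ≤ Fn j 1 := by
    intro j
    rw [hFn]
    have h1 : univ.filter (fun i => U j i ≤ (1:ℝ)) = univ :=
      Finset.filter_true_of_mem fun i _ => (hU01 j i).2
    rw [h1, Finset.card_univ, Fintype.card_fin, div_self hn'.ne']
    exact (hu j).2
  set A := univ.filter (fun k => ∀ j, U j k ≤ FnInv j (u j)) with hA
  set B := univ.filter (fun i => ∀ j, Fn j (U j i) ≤ u j) with hB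
  have hBA : B ⊆ A := by
    intro k hk
    simp only [hA, hB, Finset.mem_filter, Finset.mem_univ, true_and] at hk ⊢
    intro j
    rw [hFnInv]
    refine le_csInf ⟨1, hFn1 j⟩ ?_
    intro x hx
    by_contra h
    push_neg at h
    exact absurd ((hk j).trans hx) (hFnstep j k x h).not_ge
  have hD : ∀ j, (univ.filter (fun k => U j k ≤ FnInv j (u j) ∧ ¬ Fn j (U j k) ≤ u j)).card ≤ 1 := by
    intro j
    rw [Finset.card_le_one]
    intro a ha b hb
    simp only [Finset.mem_filter, Finset.mem_univ, true_and] at ha hb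
    rcases eq_or_lt_of_le (hu j).1 with h0 | h0
    · have hS : {x : ℝ | u j ≤ Fn j x} = Set.univ := by
        ext x; simp [← h0, hFnnn j x]
      have hInv : FnInv j (u j) = 0 := by
        rw [hFnInv, hS]
        exact Real.sInf_of_not_bddBelow not_bddBelow_univ
      apply hdist j
      have ha0 : U j a = 0 := le_antisymm (hInv ▸ ha.1) (hU01 j a).1
      have hb0 : U j b = 0 := le_antisymm (hInv ▸ hb.1) (hU01 j b).1
      rw [ha0, hb0]
    · have hbdd : BddBelow {x : ℝ | u j ≤ Fn j x} := by
        refine ⟨0, fun x hx => ?_⟩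
        by_contra hx0
        push_neg at hx0
        have hz : Fn j x = 0 := by
          rw [hFn]
          have he : univ.filter (fun i => U j i ≤ x) = ∅ := by
            apply Finset.filter_false_of_mem
            intro i _
            exact not_le.mpr (lt_of_lt_of_le hx0 (hU01 j i).1)
          rw [he]; simp
        rw [Set.mem_setOf_eq, hz] at hx
        exact absurd (lt_of_lt_of_le h0 hx) (lt_irrefl 0)
      have key : ∀ k : Fin n, U j k ≤ FnInv j (u j) → ¬ Fn j (U j k) ≤ u j →
          U j k = FnInv j (u j) := by
        intro k h1 h2
        refine le_antisymm h1 ?_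
        rw [hFnInv]
        exact csInf_le hbdd (le_of_lt (not_le.mp h2))
      exact hdist j ((key a ha.1 ha.2).trans (key b hb.1 hb.2).symm)
  have hdiff : (A \ B).card ≤ d := by
    have hsub : A \ B ⊆ univ.biUnion
        (fun j => univ.filter (fun k => U j k ≤ FnInv j (u j) ∧ ¬ Fn j (U j k) ≤ u j)) := by
      intro k hk
      rw [Finset.mem_sdiff] at hk
      obtain ⟨h1, h2⟩ := hk
      simp only [hA, Finset.mem_filter, Finset.mem_univ, true_and] at h1
      simp only [hB, Finset.mem_filter, Finset.mem_univ, true_and, not_forall] at h2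
      obtain ⟨j, hj⟩ := h2
      exact Finset.mem_biUnion.mpr ⟨j, Finset.mem_univ j,
        Finset.mem_filter.mpr ⟨Finset.mem_univ k, h1 j, hj⟩⟩
    calc (A \ B).card ≤ _ := Finset.card_le_card hsub
      _ ≤ ∑ j : Fin d, (univ.filter (fun k => U j k ≤ FnInv j (u j) ∧ ¬ Fn j (U j k) ≤ u j)).card :=
          Finset.card_biUnion_le
      _ ≤ ∑ _j : Fin d, 1 := Finset.sum_le_sum fun j _ => hD j
      _ = d := by simp
  have hAB : A.card ≤ B.card + d := by
    have h := Finset.card_sdiff_add_card_eq_card hBA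
    omega
  have hcardle : (B.card : ℝ) ≤ A.card := by exact_mod_cast Finset.card_le_card hBA
  rw [hCtil u, hCn u, ← hA, ← hB, div_sub_div_same,
    abs_of_nonneg (div_nonneg (sub_nonneg.mpr hcardle) hn'.le)]
  have hx : (A.card : ℝ) - B.card ≤ d := by
    have : (A.card : ℝ) ≤ B.card + d := by exact_mod_cast hAB
    linarith
  gcongr
end

section
/- The d-dimensional Farlie-Gumbel-Morgenstern function C(u^1,...,u^d) = (∏_{i=1}^d u^i)(α ∏_{i=1}^d (1-u^i) + 1) with α ∈ [0,1] satisfies, for every j ∈ {1,...,d} and all (u^1,...,u^d) ∈ (0,1]^d, the inequality C(u^1,...,u^d)/u^j ≥ ∂C(u^1,...,u^d)/∂u^j. -/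
open Finset

/-- the d-dimensional FGM copula with `α ∈ [0,1]` satisfies
`C(u)/u^j ≥ ∂_j C(u)` on `(0,1]^d`. -/
theorem fgm_ratio_ge_partial
    (d : ℕ) (α : ℝ) (hα : α ∈ Set.Icc (0:ℝ) 1)
    (C : (Fin d → ℝ) → ℝ)
    (hC : ∀ u, C u = (∏ i, u i) * (α * ∏ i, (1 - u i) + 1))
    (j : Fin d) (u : Fin d → ℝ) (hu : ∀ i, u i ∈ Set.Ioc (0:ℝ) 1) :
    C u / u j ≥ deriv (fun t => C (Function.update u j t)) (u j) := by
  set P : ℝ := ∏ i ∈ univ \ {j}, u i with hP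
  set Q : ℝ := ∏ i ∈ univ \ {j}, (1 - u i) with hQ
  have hfun : (fun t => C (Function.update u j t))
      = fun t => (t * P) * (α * ((1 - t) * Q) + 1) := by
    funext t
    rw [hC]
    have h1 : (∏ i, Function.update u j t i) = t * P := by
      rw [Finset.prod_update_of_mem (Finset.mem_univ j)]
    have h2 : (∏ i, (1 - Function.update u j t i)) = (1 - t) * Q := by
      have heq : (fun i => 1 - Function.update u j t i)
          = Function.update (fun i => 1 - u i) j (1 - t) := by
        funext i
        by_cases h : i = j
        · subst h; simp
        · simp [Function.update_of_ne h]
      rw [show (∏ i, (1 - Function.update u j t i))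
          = ∏ i, Function.update (fun i => 1 - u i) j (1 - t) i from
          Finset.prod_congr rfl fun i _ => congrFun heq i]
      rw [Finset.prod_update_of_mem (Finset.mem_univ j)]
    rw [h1, h2]
  have hd : HasDerivAt (fun t => (t * P) * (α * ((1 - t) * Q) + 1))
      (P * (α * ((1 - u j) * Q) + 1) + (u j * P) * (α * (-Q))) (u j) := by
    have h1 : HasDerivAt (fun t : ℝ => t * P) P (u j) := by
      simpa using (hasDerivAt_id (u j)).mul_const P
    have h2 : HasDerivAt (fun t : ℝ => α * ((1 - t) * Q) + 1) (α * (-Q)) (u j) := by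
      have h3 : HasDerivAt (fun t : ℝ => (1 - t) * Q) (-Q) (u j) := by
        simpa using ((hasDerivAt_id (u j)).const_sub 1).mul_const Q
      simpa using (h3.const_mul α).add_const 1
    exact h1.mul h2
  rw [hfun, hd.deriv, hC]
  have hujpos : 0 < u j := (hu j).1
  have hCu : (∏ i, u i) = u j * P := by
    have := Finset.prod_update_of_mem (Finset.mem_univ j) (f := u) (b := u j)
    simpa [Function.update_eq_self] using this
  have hQu : (∏ i, (1 - u i)) = (1 - u j) * Q := by
    have := Finset.prod_update_of_mem (Finset.mem_univ j)
      (f := fun i => 1 - u i) (b := 1 - u j)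
    simpa [Function.update_eq_self] using this
  rw [hCu, hQu]
  have hdiv : u j * P * (α * ((1 - u j) * Q) + 1) / u j
      = P * (α * ((1 - u j) * Q) + 1) := by
    field_simp
  rw [hdiv]
  have hPpos : 0 ≤ P := Finset.prod_nonneg fun i _ => (hu i).1.le
  have hQpos : 0 ≤ Q := Finset.prod_nonneg fun i _ => by
    have := (hu i).2; linarith
  nlinarith [mul_nonneg (mul_nonneg hα.1 hPpos) hQpos]
end

section
/- For the d-dimensional FGM copula C(u^1,...,u^d) = (∏_{i=1}^d u^i)(α ∏_{i=1}^d (1-u^i) + 1) with α ∈ [0,1], for all (ū^1,...,ū^d) ∈ (0,1)^d with C(ū^1,...,ū^d) > 0, all u^j ∈ [0,1] and each j, we have C(ū^1,...,ū^{j-1}, ū^j ∧ u^j, ū^{j+1},...,ū^d) / C(ū^1,...,ū^d) ≥ u^j. -/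
open Finset

/-- for the d-dimensional FGM copula with `α ∈ [0,1]`,
`C(ū^1,...,ū^j ∧ u^j,...,ū^d) / C(ū) ≥ u^j`. -/
theorem fgm_min_ratio_ge
    (d : ℕ) (α : ℝ) (hα : α ∈ Set.Icc (0:ℝ) 1)
    (C : (Fin d → ℝ) → ℝ)
    (hC : ∀ u, C u = (∏ i, u i) * (α * ∏ i, (1 - u i) + 1))
    (j : Fin d) (ubar : Fin d → ℝ) (hubar : ∀ i, ubar i ∈ Set.Ioo (0:ℝ) 1)
    (hCpos : 0 < C ubar)
    (u : ℝ) (hu : u ∈ Set.Icc (0:ℝ) 1) :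
    C (Function.update ubar j (min (ubar j) u)) / C ubar ≥ u := by
  obtain ⟨hα0, hα1⟩ := hα
  obtain ⟨hu0, hu1⟩ := hu
  set s := Finset.univ.erase j with hs
  have hP : 0 < ∏ i ∈ s, ubar i := Finset.prod_pos fun i _ => (hubar i).1
  have hQ : 0 < ∏ i ∈ s, (1 - ubar i) := Finset.prod_pos fun i _ => by
    have := (hubar i).2; linarith
  rcases le_total (ubar j) u with h | h
  · rw [min_eq_left h, Function.update_eq_self, div_self hCpos.ne']
    exact hu1
  · rw [min_eq_right h]
    have hprod : ∀ (f : Fin d → ℝ), ∏ i, f i = f j * ∏ i ∈ s, f i :=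
      fun f => (Finset.mul_prod_erase Finset.univ f (Finset.mem_univ j)).symm
    have e1 : ∏ i, Function.update ubar j u i = u * ∏ i ∈ s, ubar i := by
      rw [hprod]
      rw [Function.update_self]
      congr 1
      exact Finset.prod_congr rfl fun i hi =>
        Function.update_of_ne (Finset.ne_of_mem_erase hi) _ _
    have e2 : ∏ i, (1 - Function.update ubar j u i) = (1 - u) * ∏ i ∈ s, (1 - ubar i) := by
      rw [hprod fun i => 1 - Function.update ubar j u i]
      rw [Function.update_self]
      congr 1
      exact Finset.prod_congr rfl fun i hi => by
        rw [Function.update_of_ne (Finset.ne_of_mem_erase hi)]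
    have e3 : ∏ i, ubar i = ubar j * ∏ i ∈ s, ubar i := hprod ubar
    have e4 : ∏ i, (1 - ubar i) = (1 - ubar j) * ∏ i ∈ s, (1 - ubar i) :=
      hprod fun i => 1 - ubar i
    rw [hC, hC, e1, e2, e3, e4]
    set P := ∏ i ∈ s, ubar i
    set Q := ∏ i ∈ s, (1 - ubar i)
    have hj0 := (hubar j).1
    have hj1 := (hubar j).2
    have hαQ : 0 ≤ α * Q := mul_nonneg hα0 hQ.le
    have hA : 0 < α * ((1 - ubar j) * Q) + 1 := by nlinarith [mul_nonneg hαQ (show (0:ℝ) ≤ 1 - ubar j by linarith)]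
    have hden : 0 < ubar j * P * (α * ((1 - ubar j) * Q) + 1) := by positivity
    rw [ge_iff_le, le_div_iff₀ hden]
    have h1 : ubar j * (α * ((1 - ubar j) * Q) + 1) ≤ α * ((1 - ubar j) * Q) + 1 := by
      nlinarith [mul_pos (show (0:ℝ) < 1 - ubar j by linarith) hA]
    have h2 : α * ((1 - ubar j) * Q) ≤ α * ((1 - u) * Q) := by
      nlinarith [mul_le_mul_of_nonneg_left (show (1:ℝ) - ubar j ≤ 1 - u by linarith) hαQ]
    have key : ubar j * (α * ((1 - ubar j) * Q) + 1) ≤ α * ((1 - u) * Q) + 1 := by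
      linarith
    have hmul := mul_le_mul_of_nonneg_left key (by positivity : (0:ℝ) ≤ u * P)
    nlinarith [hmul]
end

section
/- The d-dimensional Ali-Mikhail-Haq function C(u^1,...,u^d) = (∏_{i=1}^d u^i) / (1 - α ∏_{i=1}^d (1-u^i)) with α ∈ [0,1] satisfies, for every j ∈ {1,...,d} and all (u^1,...,u^d) ∈ (0,1]^d, the inequality C(u^1,...,u^d)/u^j ≥ ∂C(u^1,...,u^d)/∂u^j. -/
open Finset

/-!
Freezing every coordinate but the `j`-th, `C` becomes `t ↦ t P / (c + b t)`, where `P` and `Q` are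
the products of `u i` and of `1 - u i` over `i ≠ j`, `b = α Q` and `c = 1 - α Q`. For such a
function `C(t) / t - C'(t) = P b t / (c + b t)²`, which is nonnegative because `P`, `b` and `t` are.
-/

theorem prod_comp_update {ι α M : Type*} [Fintype ι] [DecidableEq ι] [CommMonoid M]
    (g : α → M) (u : ι → α) (j : ι) (t : α) :
    ∏ i, g (Function.update u j t i) = g t * ∏ i ∈ univ.erase j, g (u i) := by
  rw [← mul_prod_erase _ _ (mem_univ j), Function.update_self]
  congr 1
  exact prod_congr rfl fun i hi => by rw [Function.update_of_ne (ne_of_mem_erase hi)]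

theorem hasDerivAt_mul_div_linear {p b c t : ℝ} (h : c + b * t ≠ 0) :
    HasDerivAt (fun s => s * p / (c + b * s)) (p * c / (c + b * t) ^ 2) t :=
  (((hasDerivAt_id' t).mul_const p).fun_div
    (((hasDerivAt_id' t).const_mul b).const_add c) h).congr_deriv (by ring)

theorem deriv_mul_div_linear_le_div_self {p b c t : ℝ} (hpb : 0 ≤ p * b) (ht : 0 < t)
    (h : c + b * t ≠ 0) :
    deriv (fun s => s * p / (c + b * s)) t ≤ t * p / (c + b * t) / t := by
  rw [(hasDerivAt_mul_div_linear h).deriv]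
  have hgap :
      t * p / (c + b * t) / t - p * c / (c + b * t) ^ 2 = p * b * t / (c + b * t) ^ 2 := by
    field_simp
    ring
  have : 0 ≤ p * b * t / (c + b * t) ^ 2 := by positivity
  linarith

/-- the d-dimensional AMH copula with `α ∈ [0,1]` satisfies
`C(u)/u^j ≥ ∂_j C(u)` on `(0,1]^d`. -/
theorem amh_ratio_ge_partial
    (d : ℕ) (α : ℝ) (hα : α ∈ Set.Icc (0:ℝ) 1)
    (C : (Fin d → ℝ) → ℝ)
    (hC : ∀ u, C u = (∏ i, u i) / (1 - α * ∏ i, (1 - u i)))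
    (j : Fin d) (u : Fin d → ℝ) (hu : ∀ i, u i ∈ Set.Ioc (0:ℝ) 1) :
    C u / u j ≥ deriv (fun t => C (Function.update u j t)) (u j) := by
  obtain ⟨hα0, hα1⟩ := hα
  set P := ∏ i ∈ univ.erase j, u i
  set Q := ∏ i ∈ univ.erase j, (1 - u i)
  have hP : 0 ≤ P := prod_nonneg fun i _ => (hu i).1.le
  have hQ : 0 ≤ Q := prod_nonneg fun i _ => sub_nonneg.2 (hu i).2
  have hQ1 : Q ≤ 1 :=
    prod_le_one (fun i _ => sub_nonneg.2 (hu i).2) fun i _ => by linarith [(hu i).1]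
  have hsection : (fun t => C (Function.update u j t)) =
      fun t => t * P / ((1 - α * Q) + α * Q * t) := by
    funext t
    have hnum : ∏ i, Function.update u j t i = t * P := prod_comp_update (fun x => x) u j t
    have hcompl : ∏ i, (1 - Function.update u j t i) = (1 - t) * Q :=
      prod_comp_update (fun x => 1 - x) u j t
    rw [hC, hnum, hcompl]
    ring
  have hCu : C u = u j * P / ((1 - α * Q) + α * Q * u j) := by
    simpa using congrFun hsection (u j)
  have hden : 0 < (1 - α * Q) + α * Q * u j := by
    have hαQ : α * Q ≤ 1 := mul_le_one₀ hα1 hQ hQ1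
    nlinarith [(hu j).1, mul_nonneg (sub_nonneg.2 hαQ) (sub_nonneg.2 (hu j).2)]
  rw [hsection, hCu, ge_iff_le]
  exact deriv_mul_div_linear_le_div_self (by positivity) (hu j).1 hden.ne'
end

section
/- For the d-dimensional AMH copula C(u^1,...,u^d) = (∏_{i=1}^d u^i)/(1 - α ∏_{i=1}^d (1-u^i)) with α ∈ [0,1], for all (ū^1,...,ū^d) ∈ (0,1)^d, all u^j ∈ [0,1] and each j ∈ {1,...,d}, we have C(ū^1,...,ū^{j-1}, ū^j ∧ u^j, ū^{j+1},...,ū^d) / C(ū^1,...,ū^d) ≥ u^j. -/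
open Finset

/-- for the d-dimensional AMH copula with `α ∈ [0,1]`,
`C(ū^1,...,ū^j ∧ u^j,...,ū^d) / C(ū) ≥ u^j`. -/
theorem amh_min_ratio_ge
    (d : ℕ) (α : ℝ) (hα : α ∈ Set.Icc (0:ℝ) 1)
    (C : (Fin d → ℝ) → ℝ)
    (hC : ∀ u, C u = (∏ i, u i) / (1 - α * ∏ i, (1 - u i)))
    (j : Fin d) (ubar : Fin d → ℝ) (hubar : ∀ i, ubar i ∈ Set.Ioo (0:ℝ) 1)
    (u : ℝ) (hu : u ∈ Set.Icc (0:ℝ) 1) :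
    C (Function.update ubar j (min (ubar j) u)) / C ubar ≥ u := by
  obtain ⟨hα0, hα1⟩ := hα
  obtain ⟨hu0, hu1⟩ := hu
  set R := ∏ i ∈ univ.erase j, ubar i with hR
  set S := ∏ i ∈ univ.erase j, (1 - ubar i) with hS
  have hRpos : 0 < R := Finset.prod_pos (fun i _ => (hubar i).1)
  have hSpos : 0 < S := Finset.prod_pos (fun i _ => by linarith [(hubar i).2])
  have hS1 : S ≤ 1 := Finset.prod_le_one
    (fun i _ => by linarith [(hubar i).2]) (fun i _ => by linarith [(hubar i).1])
  have hbj0 := (hubar j).1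
  have hbj1 := (hubar j).2
  have hPbar : ∏ i, ubar i = ubar j * R :=
    (Finset.mul_prod_erase univ ubar (mem_univ j)).symm
  have hQbar : ∏ i, (1 - ubar i) = (1 - ubar j) * S :=
    (Finset.mul_prod_erase univ (fun i => 1 - ubar i) (mem_univ j)).symm
  have hαS : α * S ≤ 1 := by nlinarith
  have hDbar : 0 < 1 - α * ((1 - ubar j) * S) := by
    have hx : (1 - ubar j) * S < 1 := by nlinarith [mul_pos hbj0 hSpos]
    have hx0 : 0 ≤ (1 - ubar j) * S := mul_nonneg (by linarith) hSpos.le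
    have := mul_le_of_le_one_left hx0 hα1
    linarith
  have hCbar : C ubar = (ubar j * R) / (1 - α * ((1 - ubar j) * S)) := by
    rw [hC, hPbar, hQbar]
  have hCbarpos : 0 < C ubar := by
    rw [hCbar]; exact div_pos (mul_pos hbj0 hRpos) hDbar
  rcases le_or_gt (ubar j) u with h | h
  · have hmin : min (ubar j) u = ubar j := min_eq_left h
    rw [hmin, Function.update_eq_self, div_self (ne_of_gt hCbarpos)]
    linarith
  · have hmin : min (ubar j) u = u := min_eq_right h.le
    rw [hmin]
    have hP' : ∏ i, Function.update ubar j u i = u * R := by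
      rw [Finset.prod_update_of_mem (mem_univ j), ← Finset.erase_eq]
    have hQ' : ∏ i, (1 - Function.update ubar j u i) = (1 - u) * S := by
      have h1 : ∏ i, (1 - Function.update ubar j u i)
          = ∏ i, Function.update (fun i => 1 - ubar i) j (1 - u) i := by
        apply Finset.prod_congr rfl
        intro i _
        by_cases hi : i = j <;> simp [Function.update_apply, hi]
      rw [h1, Finset.prod_update_of_mem (mem_univ j), ← Finset.erase_eq]
    have hu1' : u < 1 := lt_trans h hbj1
    rcases le_or_gt u 0 with hu0' | hu0'
    · refine le_trans hu0' (div_nonneg ?_ hCbarpos.le)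
      rw [hC, hP', hQ']
      refine div_nonneg (mul_nonneg hu0 hRpos.le) ?_
      have hx0 : 0 ≤ (1 - u) * S := mul_nonneg (by linarith) hSpos.le
      have := mul_le_of_le_one_left hx0 hα1
      nlinarith
    · have hD' : 0 < 1 - α * ((1 - u) * S) := by
        have hx : (1 - u) * S < 1 := by nlinarith [mul_pos hu0' hSpos]
        have hx0 : 0 ≤ (1 - u) * S := mul_nonneg (by linarith) hSpos.le
        have := mul_le_of_le_one_left hx0 hα1
        linarith
      rw [hC, hP', hQ', ge_iff_le, le_div_iff₀ hCbarpos, hCbar]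
      rw [← mul_div_assoc, div_le_div_iff₀ hDbar hD']
      have key1 : 0 ≤ u * R * (1 - ubar j) * (1 - α * S) :=
        mul_nonneg (mul_nonneg (mul_nonneg hu0 hRpos.le) (by linarith)) (by linarith)
      have key2 : 0 ≤ u * R * (α * S) * (ubar j) * (1 - u) :=
        mul_nonneg (mul_nonneg (mul_nonneg (mul_nonneg hu0 hRpos.le)
          (mul_nonneg hα0 hSpos.le)) hbj0.le) (by linarith)
      nlinarith [key1, key2]
end
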